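/- Let (Ω, ℱ, ℙ) be a probability space, let Q be a nonempty finite index set, and let S_p : Ω → ℝ and S_q : Ω → ℝ (for q ∈ Q) be random variables such that X = Σ_{q ∈ Q} exp(S_q − S_p) is integrable. Define the loss random variable ℓ = log( 1 + Σ_{q ∈ Q} exp(S_q − S_p) ), equivalently ℓ = −log( exp(S_p) / ( exp(S_p) + Σ_{q ∈ Q} exp(S_q) ) ). Then the probability of the mis-ranking event satisfies ℙ( ∃ q ∈ Q : S_q ≥ S_p ) ≤ 𝔼[ e^{ℓ} − 1 ] = 𝔼[ Σ_{q ∈ Q} exp(S_q − S_p) ]. -/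
import Mathlib


open MeasureTheory

/-- **Proposition 2 (bound on the probability of the mis-ranking event).**
On a probability space, given random scores `Sp` and `S q` (`q ∈ Q`, `Q` a nonempty finite
index set) with `X = ∑_{q ∈ Q} exp (S q - Sp)` integrable, and the loss
`ℓ = log (1 + X)` (equivalently `ℓ = -log (exp Sp / (exp Sp + ∑_q exp (S q)))`), the
probability that some negative score outranks the positive one satisfies
`ℙ(∃ q ∈ Q, S q ≥ Sp) ≤ 𝔼[e^ℓ - 1] = 𝔼[X]`. -/
theorem misranking_probability_bound {Ω : Type*} [MeasurableSpace Ω]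
    (μ : Measure Ω) [IsProbabilityMeasure μ]
    {ι : Type*} (Q : Finset ι) (hQ : Q.Nonempty)
    (Sp : Ω → ℝ) (S : ι → Ω → ℝ)
    (hSp : Measurable Sp) (hS : ∀ q ∈ Q, Measurable (S q))
    (X : Ω → ℝ) (hX : X = fun ω => ∑ q ∈ Q, Real.exp (S q ω - Sp ω))
    (hXint : Integrable X μ)
    (loss : Ω → ℝ) (hloss : loss = fun ω => Real.log (1 + X ω)) :
    μ {ω | ∃ q ∈ Q, Sp ω ≤ S q ω}
        ≤ ENNReal.ofReal (∫ ω, (Real.exp (loss ω) - 1) ∂μ) ∧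
      ∫ ω, (Real.exp (loss ω) - 1) ∂μ = ∫ ω, X ω ∂μ := by
  have hXnonneg : ∀ ω, 0 ≤ X ω := by
    intro ω; rw [hX]
    exact Finset.sum_nonneg fun q _ => (Real.exp_pos _).le
  have heq : ∀ ω, Real.exp (loss ω) - 1 = X ω := by
    intro ω
    rw [hloss]
    simp only
    rw [Real.exp_log (by linarith [hXnonneg ω])]
    ring
  have hint_eq : ∫ ω, (Real.exp (loss ω) - 1) ∂μ = ∫ ω, X ω ∂μ :=
    integral_congr_ae (Filter.Eventually.of_forall heq)
  refine ⟨?_, hint_eq⟩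
  rw [hint_eq]
  have hsub : {ω | ∃ q ∈ Q, Sp ω ≤ S q ω} ⊆ {ω | (1 : ℝ) ≤ X ω} := by
    intro ω hω
    obtain ⟨q, hq, hle⟩ := hω
    rw [hX]
    calc (1 : ℝ) ≤ Real.exp (S q ω - Sp ω) := by
          rw [← Real.exp_zero]; exact Real.exp_le_exp.2 (by linarith)
      _ ≤ ∑ r ∈ Q, Real.exp (S r ω - Sp ω) :=
          Finset.single_le_sum (f := fun r => Real.exp (S r ω - Sp ω)) (fun r _ => (Real.exp_pos _).le) hq
  have hmarkov := mul_meas_ge_le_integral_of_nonneg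
    (Filter.Eventually.of_forall hXnonneg) hXint 1
  rw [one_mul] at hmarkov
  calc μ {ω | ∃ q ∈ Q, Sp ω ≤ S q ω} ≤ μ {ω | (1 : ℝ) ≤ X ω} := measure_mono hsub
    _ = ENNReal.ofReal (μ {ω | (1 : ℝ) ≤ X ω}).toReal := (ENNReal.ofReal_toReal (measure_ne_top _ _)).symm
    _ ≤ ENNReal.ofReal (∫ ω, X ω ∂μ) := ENNReal.ofReal_le_ofReal hmarkov
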